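/- Let φ, d_m, d_ℓ, d_t be positive reals with d_t ≤ d_ℓ. The diffusion–dispersion tensor u ↦ D(u) is globally Lipschitz on ℝ²: for all u, v ∈ ℝ², ‖D(u) − D(v)‖ ≤ 3 φ d_ℓ |u − v|, where ‖·‖ is the operator norm on 2×2 matrices and |·| the Euclidean norm on ℝ². -/

import Mathlib

open scoped RealInnerProductSpace

/-- `E(u) = u uᵀ / |u|²`, the matrix projecting onto the direction of `u` (for `u ≠ 0`). -/
noncomputable def Emat (u : EuclideanSpace ℝ (Fin 2)) : Matrix (Fin 2) (Fin 2) ℝ :=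
  Matrix.of fun i j => u i * u j / ‖u‖ ^ 2

open scoped Classical in
/-- The diffusion–dispersion tensor
`D(u) = φ [ d_m I + |u| ( d_ℓ E(u) + d_t (I − E(u)) ) ]`, with `D(0) = φ d_m I`. -/
noncomputable def Dmat (φ dm dl dt : ℝ) (u : EuclideanSpace ℝ (Fin 2)) :
    Matrix (Fin 2) (Fin 2) ℝ :=
  if u = 0 then (φ * dm) • (1 : Matrix (Fin 2) (Fin 2) ℝ)
  else φ • (dm • (1 : Matrix (Fin 2) (Fin 2) ℝ) +
    ‖u‖ • (dl • Emat u + dt • ((1 : Matrix (Fin 2) (Fin 2) ℝ) - Emat u)))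

/-- The operator norm (on Euclidean space) of a `2×2` matrix. -/
noncomputable def NN (M : Matrix (Fin 2) (Fin 2) ℝ) : ℝ :=
  ‖LinearMap.toContinuousLinearMap (Matrix.toEuclideanLin M)‖

lemma NN_add_le (A B : Matrix (Fin 2) (Fin 2) ℝ) : NN (A + B) ≤ NN A + NN B := by
  simp only [NN, map_add]
  exact norm_add_le _ _

lemma NN_nonneg (A : Matrix (Fin 2) (Fin 2) ℝ) : 0 ≤ NN A := norm_nonneg _

lemma NN_smul (c : ℝ) (A : Matrix (Fin 2) (Fin 2) ℝ) : NN (c • A) = |c| * NN A := by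
  simp only [NN, map_smul]
  have := norm_smul c (LinearMap.toContinuousLinearMap (Matrix.toEuclideanLin A))
  simpa using this

lemma NN_neg (A : Matrix (Fin 2) (Fin 2) ℝ) : NN (-A) = NN A := by
  have := NN_smul (-1) A
  simpa using this

lemma NN_one : NN 1 ≤ 1 := by
  apply ContinuousLinearMap.opNorm_le_bound _ zero_le_one
  intro x
  have h : (Matrix.toEuclideanLin (1 : Matrix (Fin 2) (Fin 2) ℝ)) x = x := by
    ext i
    simp [Matrix.toEuclideanLin_apply]
  rw [LinearMap.coe_toContinuousLinearMap', h]; simp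

/-- Rank-one matrix `a bᵀ`. -/
def Rmat (a b : EuclideanSpace ℝ (Fin 2)) : Matrix (Fin 2) (Fin 2) ℝ :=
  Matrix.of fun i j => a i * b j

lemma NN_Rmat_le (a b : EuclideanSpace ℝ (Fin 2)) : NN (Rmat a b) ≤ ‖a‖ * ‖b‖ := by
  apply ContinuousLinearMap.opNorm_le_bound _ (by positivity)
  intro x
  have h : (Matrix.toEuclideanLin (Rmat a b)) x = ⟪b, x⟫ • a := by
    ext i
    simp [Rmat, Matrix.toEuclideanLin_apply, Matrix.mulVec, dotProduct,
      PiLp.inner_apply, Finset.sum_mul, mul_add, mul_comm, mul_assoc, mul_left_comm]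
    fin_cases i <;> simp
  rw [LinearMap.coe_toContinuousLinearMap', h, norm_smul]
  calc ‖⟪b, x⟫‖ * ‖a‖ ≤ (‖b‖ * ‖x‖) * ‖a‖ := by
        have := abs_real_inner_le_norm b x
        exact mul_le_mul_of_nonneg_right (by simpa using this) (norm_nonneg a)
    _ = ‖a‖ * ‖b‖ * ‖x‖ := by ring

/-- `f(u) = u uᵀ / ‖u‖` (equal to `0` at `u = 0` by junk-value conventions). -/
noncomputable def fmat (u : EuclideanSpace ℝ (Fin 2)) : Matrix (Fin 2) (Fin 2) ℝ :=
  Matrix.of fun i j => u i * u j / ‖u‖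

lemma fmat_eq (u : EuclideanSpace ℝ (Fin 2)) : fmat u = ‖u‖⁻¹ • Rmat u u := by
  ext i j
  simp [fmat, Rmat, div_eq_mul_inv, mul_comm]

lemma fmat_zero : fmat (0 : EuclideanSpace ℝ (Fin 2)) = 0 := by
  ext i j
  simp [fmat]

lemma NN_fmat_le (u : EuclideanSpace ℝ (Fin 2)) : NN (fmat u) ≤ ‖u‖ := by
  rcases eq_or_ne u 0 with rfl | hu
  · simp only [fmat_zero]
    have : NN (0 : Matrix (Fin 2) (Fin 2) ℝ) = 0 := by
      have := NN_smul 0 (0 : Matrix (Fin 2) (Fin 2) ℝ)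
      simpa using this
    simp [this]
  · have hn : (0:ℝ) < ‖u‖ := norm_pos_iff.mpr hu
    rw [fmat_eq, NN_smul]
    calc |‖u‖⁻¹| * NN (Rmat u u) ≤ ‖u‖⁻¹ * (‖u‖ * ‖u‖) := by
          rw [abs_of_nonneg (by positivity)]
          exact mul_le_mul_of_nonneg_left (NN_Rmat_le u u) (by positivity)
      _ = ‖u‖ := by field_simp
      
lemma NN_fmat_sub_le_aux (u v : EuclideanSpace ℝ (Fin 2)) (hvu : ‖v‖ ≤ ‖u‖) :
    NN (fmat u - fmat v) ≤ 3 * ‖u - v‖ := by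
  rcases eq_or_ne v 0 with rfl | hv
  · rw [fmat_zero, sub_zero, sub_zero]
    have := NN_fmat_le u
    nlinarith [norm_nonneg u, NN_fmat_le u]
  · have hvn : (0:ℝ) < ‖v‖ := norm_pos_iff.mpr hv
    have hun : (0:ℝ) < ‖u‖ := lt_of_lt_of_le hvn hvu
    have hdec : fmat u - fmat v =
        ‖u‖⁻¹ • (Rmat (u - v) u + Rmat v (u - v)) + (‖u‖⁻¹ - ‖v‖⁻¹) • Rmat v v := by
      ext i j
      simp only [fmat, Rmat, Matrix.sub_apply, Matrix.add_apply, Matrix.smul_apply,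
        Matrix.of_apply, smul_eq_mul, PiLp.sub_apply]
      field_simp
      ring
    have h1 : NN (‖u‖⁻¹ • (Rmat (u - v) u + Rmat v (u - v))) ≤ 2 * ‖u - v‖ := by
      rw [NN_smul, abs_of_nonneg (by positivity)]
      have hA : NN (Rmat (u - v) u + Rmat v (u - v)) ≤ ‖u - v‖ * ‖u‖ + ‖v‖ * ‖u - v‖ :=
        le_trans (NN_add_le _ _) (add_le_add (NN_Rmat_le _ _) (NN_Rmat_le _ _))
      calc ‖u‖⁻¹ * NN (Rmat (u - v) u + Rmat v (u - v))
          ≤ ‖u‖⁻¹ * (‖u - v‖ * ‖u‖ + ‖v‖ * ‖u - v‖) :=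
            mul_le_mul_of_nonneg_left hA (by positivity)
        _ = ‖u - v‖ + (‖v‖ / ‖u‖) * ‖u - v‖ := by field_simp
        _ ≤ ‖u - v‖ + 1 * ‖u - v‖ := by
            gcongr
            rw [div_le_one hun]; exact hvu
        _ = 2 * ‖u - v‖ := by ring
    have h2 : NN ((‖u‖⁻¹ - ‖v‖⁻¹) • Rmat v v) ≤ ‖u - v‖ := by
      rw [NN_smul]
      have habs : |‖u‖⁻¹ - ‖v‖⁻¹| = (‖u‖ - ‖v‖) / (‖u‖ * ‖v‖) := by
        rw [abs_of_nonpos (by simpa using inv_anti₀ hvn hvu)]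
        field_simp
        ring
      have huv : ‖u‖ - ‖v‖ ≤ ‖u - v‖ := by
        have := abs_norm_sub_norm_le u v
        exact le_trans (le_abs_self _) this
      calc |‖u‖⁻¹ - ‖v‖⁻¹| * NN (Rmat v v)
          ≤ ((‖u‖ - ‖v‖) / (‖u‖ * ‖v‖)) * (‖v‖ * ‖v‖) := by
            rw [habs]
            exact mul_le_mul_of_nonneg_left (NN_Rmat_le v v)
              (div_nonneg (by linarith) (by positivity))
        _ = (‖u‖ - ‖v‖) * (‖v‖ / ‖u‖) := by field_simp
        _ ≤ ‖u - v‖ * 1 := by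
            apply mul_le_mul huv _ (by positivity) (norm_nonneg _)
            rw [div_le_one hun]; exact hvu
        _ = ‖u - v‖ := by ring
    calc NN (fmat u - fmat v) ≤ _ := by rw [hdec]; exact NN_add_le _ _
      _ ≤ 2 * ‖u - v‖ + ‖u - v‖ := add_le_add h1 h2
      _ = 3 * ‖u - v‖ := by ring

lemma NN_fmat_sub_le (u v : EuclideanSpace ℝ (Fin 2)) :
    NN (fmat u - fmat v) ≤ 3 * ‖u - v‖ := by
  rcases le_total ‖v‖ ‖u‖ with h | h
  · exact NN_fmat_sub_le_aux u v h
  · have := NN_fmat_sub_le_aux v u h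
    rw [← NN_neg, neg_sub] at this
    rwa [← norm_neg, neg_sub] at this

lemma Dmat_eq (φ dm dl dt : ℝ) (u : EuclideanSpace ℝ (Fin 2)) :
    Dmat φ dm dl dt u =
      (φ * (dm + dt * ‖u‖)) • (1 : Matrix (Fin 2) (Fin 2) ℝ) + (φ * (dl - dt)) • fmat u := by
  rcases eq_or_ne u 0 with rfl | hu
  · rw [Dmat, if_pos rfl, fmat_zero]
    simp
  · have hn : ‖u‖ ≠ 0 := norm_ne_zero_iff.mpr hu
    rw [Dmat, if_neg hu]
    ext i j
    simp only [Emat, fmat, Matrix.smul_apply, Matrix.add_apply, Matrix.sub_apply,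
      Matrix.of_apply, smul_eq_mul]
    field_simp
    ring

/-- Global Lipschitz continuity of the diffusion–dispersion tensor:
for `0 < d_t ≤ d_ℓ`, `‖D(u) − D(v)‖ ≤ 3 φ d_ℓ |u − v|` in the operator norm on
`2×2` matrices (realized as the operator norm of the induced map on Euclidean space). -/
theorem stmt_12 (φ dm dl dt : ℝ) (hφ : 0 < φ) (hdm : 0 < dm) (hdl : 0 < dl) (hdt : 0 < dt)
    (hdtl : dt ≤ dl) (u v : EuclideanSpace ℝ (Fin 2)) :
    ‖LinearMap.toContinuousLinearMap
        (Matrix.toEuclideanLin (Dmat φ dm dl dt u - Dmat φ dm dl dt v))‖ ≤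
      3 * φ * dl * ‖u - v‖ := by
  show NN (Dmat φ dm dl dt u - Dmat φ dm dl dt v) ≤ 3 * φ * dl * ‖u - v‖
  have hdec : Dmat φ dm dl dt u - Dmat φ dm dl dt v =
      (φ * dt * (‖u‖ - ‖v‖)) • (1 : Matrix (Fin 2) (Fin 2) ℝ) +
        (φ * (dl - dt)) • (fmat u - fmat v) := by
    rw [Dmat_eq, Dmat_eq]
    module
  have huv : |‖u‖ - ‖v‖| ≤ ‖u - v‖ := abs_norm_sub_norm_le u v
  have h1 : NN ((φ * dt * (‖u‖ - ‖v‖)) • (1 : Matrix (Fin 2) (Fin 2) ℝ)) ≤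
      φ * dt * ‖u - v‖ := by
    rw [NN_smul, abs_mul, abs_of_nonneg (by positivity : (0:ℝ) ≤ φ * dt)]
    calc φ * dt * |‖u‖ - ‖v‖| * NN 1 ≤ φ * dt * ‖u - v‖ * 1 := by
          apply mul_le_mul _ NN_one (NN_nonneg _) (by positivity)
          exact mul_le_mul_of_nonneg_left huv (by positivity)
      _ = φ * dt * ‖u - v‖ := by ring
  have h2 : NN ((φ * (dl - dt)) • (fmat u - fmat v)) ≤ φ * (dl - dt) * (3 * ‖u - v‖) := by
    rw [NN_smul, abs_of_nonneg (by nlinarith : (0:ℝ) ≤ φ * (dl - dt))]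
    exact mul_le_mul_of_nonneg_left (NN_fmat_sub_le u v) (by nlinarith)
  calc NN (Dmat φ dm dl dt u - Dmat φ dm dl dt v) ≤ _ := by rw [hdec]; exact NN_add_le _ _
    _ ≤ φ * dt * ‖u - v‖ + φ * (dl - dt) * (3 * ‖u - v‖) := add_le_add h1 h2
    _ ≤ 3 * φ * dl * ‖u - v‖ := by
        nlinarith [norm_nonneg (u - v), mul_nonneg (mul_nonneg hφ.le hdt.le) (norm_nonneg (u - v))]
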